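/- arXiv:1804.09463 — 11 statements merged into one kernel-verified Lean document; each statement's English description precedes it below -/
import Mathlib

section
/- For every pair (ω,v) ∈ so(n) × ℝⁿ there exists (r,d) ∈ E(n) such that, writing (ω',v') = Ad_{(r,d)}(ω,v) = (r ω r⁻¹, r v − (r ω r⁻¹) d), one has ω' v' = 0. (Every adjoint orbit of E(n) intersects the Cartan subset Δ = {(ω,v) : ω v = 0}.) -/
open Matrix

abbrev Mat (n : ℕ) := Matrix (Fin n) (Fin n) ℝ
abbrev Vec (n : ℕ) := Fin n → ℝ

/-- `r` is an orthogonal matrix. -/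
def IsOrth {n : ℕ} (r : Mat n) : Prop := r * rᵀ = 1 ∧ rᵀ * r = 1

/-- `ω` is skew-symmetric. -/
def IsSkew {n : ℕ} (ω : Mat n) : Prop := ωᵀ = -ω

/-- Adjoint action of `(r,d) ∈ E(n)` on `(ω,v) ∈ so(n) × ℝⁿ`. -/
noncomputable def Ad {n : ℕ} (r : Mat n) (d : Vec n) (ω : Mat n) (v : Vec n) :
    Mat n × Vec n :=
  (r * ω * r⁻¹, r *ᵥ v - (r * ω * r⁻¹) *ᵥ d)

/-- The momentum map `μ(p,d) = ½(p dᵀ − d pᵀ)`. -/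
noncomputable def mu {n : ℕ} (p d : Vec n) : Mat n :=
  (1/2 : ℝ) • (vecMulVec p d - vecMulVec d p)

/-- Coadjoint action of `(r,d) ∈ E(n)` on `(L,p) ∈ so(n)* × (ℝⁿ)* ≃ so(n) × ℝⁿ`. -/
noncomputable def CoAd {n : ℕ} (r : Mat n) (d : Vec n) (L : Mat n) (p : Vec n) :
    Mat n × Vec n :=
  (r * L * r⁻¹ + mu (r *ᵥ p) d, r *ᵥ p)

/-- Since `ω` is skew, `range ω² = range ω`, so `ω v` lies in the range of `ω²`. -/
theorem exists_sq_mulVec {n : ℕ} (ω : Mat n) (hω : IsSkew ω) (v : Vec n) :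
    ∃ d, (ω * ω) *ᵥ d = ω *ᵥ v := by
  have hω' : ωᵀ = -ω := hω
  have hker : LinearMap.ker (ω.mulVecLin ∘ₗ ω.mulVecLin) = LinearMap.ker ω.mulVecLin := by
    ext x
    simp only [LinearMap.mem_ker, LinearMap.comp_apply, mulVecLin_apply]
    constructor
    · intro h
      have h0 : (ω *ᵥ x) ⬝ᵥ (ω *ᵥ x) = 0 := by
        have h2 : x ⬝ᵥ (ωᵀ *ᵥ (ω *ᵥ x)) = (ω *ᵥ x) ⬝ᵥ (ω *ᵥ x) := by
          rw [Matrix.dotProduct_mulVec, Matrix.vecMul_transpose]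
        rw [← h2, hω', Matrix.neg_mulVec, h]
        simp
      exact (dotProduct_self_eq_zero).mp h0
    · intro h; rw [h, Matrix.mulVec_zero]
  have hrange : LinearMap.range (ω.mulVecLin ∘ₗ ω.mulVecLin) = LinearMap.range ω.mulVecLin := by
    apply Submodule.eq_of_le_of_finrank_le
    · rintro _ ⟨x, rfl⟩; exact ⟨ω *ᵥ x, rfl⟩
    · have h1 := (ω.mulVecLin ∘ₗ ω.mulVecLin).finrank_range_add_finrank_ker
      have h2 := ω.mulVecLin.finrank_range_add_finrank_ker
      rw [hker] at h1
      omega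
  have : ω *ᵥ v ∈ LinearMap.range (ω.mulVecLin ∘ₗ ω.mulVecLin) := by
    rw [hrange]; exact ⟨v, rfl⟩
  obtain ⟨d, hd⟩ := this
  exact ⟨d, by simpa [mulVec_mulVec] using hd⟩

/-- Every adjoint orbit of `E(n)` intersects the Cartan subset `Δ = {(ω,v) : ω v = 0}`. -/
theorem stmt0 {n : ℕ} (ω : Mat n) (hω : IsSkew ω) (v : Vec n) :
    ∃ (r : Mat n) (d : Vec n), IsOrth r ∧
      (Ad r d ω v).1 *ᵥ (Ad r d ω v).2 = 0 := by
  obtain ⟨d, hd⟩ := exists_sq_mulVec ω hω v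
  refine ⟨1, d, ⟨by simp, by simp⟩, ?_⟩
  simp only [Ad, inv_one, one_mul, mul_one, Matrix.one_mulVec,
    Matrix.mulVec_sub, Matrix.mulVec_mulVec, hd, sub_self]
end

section
/- For every pair (L,p) ∈ so(n) × ℝⁿ there exists (r,d) ∈ E(n) such that, writing (L',p') = Ad*_{(r,d)}(L,p) = (r L r⁻¹ + μ(r p, d), r p), one has L' p' = 0. (Every coadjoint orbit of E(n) intersects the Cartan subset Δ* = {(L,p) : L p = 0}.) -/
open Matrix

/-- Every coadjoint orbit of `E(n)` intersects the Cartan subset `Δ* = {(L,p) : L p = 0}`. -/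
theorem stmt1 {n : ℕ} (L : Mat n) (hL : IsSkew L) (p : Vec n) :
    ∃ (r : Mat n) (d : Vec n), IsOrth r ∧
      (CoAd r d L p).1 *ᵥ (CoAd r d L p).2 = 0 := by
  have hLpp : (L *ᵥ p) ⬝ᵥ p = 0 := by
    have hvm : p ᵥ* L = Lᵀ *ᵥ p := by
      rw [← transpose_transpose L, vecMul_transpose, transpose_transpose]
    have h1 : (L *ᵥ p) ⬝ᵥ p = -((L *ᵥ p) ⬝ᵥ p) := by
      conv_lhs => rw [dotProduct_comm, dotProduct_mulVec]
      rw [hvm, hL, neg_mulVec, neg_dotProduct]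
    linarith
  by_cases hp : p ⬝ᵥ p = 0
  · have hp0 : p = 0 := (dotProduct_self_eq_zero (v := p)).mp hp
    refine ⟨1, 0, ⟨by simp, by simp⟩, ?_⟩
    simp [CoAd, hp0]
  · refine ⟨1, (2 / (p ⬝ᵥ p)) • (L *ᵥ p), ⟨by simp, by simp⟩, ?_⟩
    set c : ℝ := 2 / (p ⬝ᵥ p) with hc
    set d : Vec n := c • (L *ᵥ p) with hd
    have hdp : d ⬝ᵥ p = 0 := by
      rw [hd, smul_dotProduct, hLpp, smul_zero]
    have hCo : CoAd 1 d L p = (L + mu p d, p) := by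
      simp [CoAd]
    rw [hCo]
    have h1 : vecMulVec p d *ᵥ p = (d ⬝ᵥ p) • p := by
      funext i
      simp [vecMulVec, mulVec, dotProduct, Finset.sum_mul, Finset.mul_sum, mul_comm, mul_left_comm, mul_assoc]
    have h2 : vecMulVec d p *ᵥ p = (p ⬝ᵥ p) • d := by
      funext i
      simp [vecMulVec, mulVec, dotProduct, Finset.sum_mul, Finset.mul_sum, mul_comm, mul_left_comm, mul_assoc]
    have hmu : mu p d *ᵥ p = -(L *ᵥ p) := by
      rw [mu, smul_mulVec, sub_mulVec, h1, h2, hdp, hd, smul_smul, hc]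
      funext i
      simp only [Pi.smul_apply, Pi.sub_apply, Pi.zero_apply, Pi.neg_apply, smul_eq_mul,
        zero_smul, Pi.zero_apply]
      field_simp
      ring
    simp [add_mulVec, hmu]
end

section
/- Let (ω,v) ∈ so(n) × ℝⁿ satisfy ω v = 0 (i.e. (ω,v) is a proper point in the Cartan subset Δ). Then an element (r,d) ∈ E(n) satisfies Ad_{(r,d)}(ω,v) = (ω,v) if and only if r ω r⁻¹ = ω, r v = v, and ω d = 0. (Equivalently, the adjoint isotropy subgroup at (ω,v) is the semidirect product (H_ω ∩ H_v) ⋉ ker ω.) -/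
open Matrix

/-- Adjoint isotropy subgroup at a proper point `(ω,v) ∈ Δ`. -/
theorem stmt2 {n : ℕ} (ω : Mat n) (hω : IsSkew ω) (v : Vec n) (hωv : ω *ᵥ v = 0)
    (r : Mat n) (hr : IsOrth r) (d : Vec n) :
    Ad r d ω v = (ω, v) ↔ (r * ω * r⁻¹ = ω ∧ r *ᵥ v = v ∧ ω *ᵥ d = 0) := by
  have hinv : r⁻¹ = rᵀ := Matrix.inv_eq_left_inv hr.2
  constructor
  · intro h
    have h1 : r * ω * r⁻¹ = ω := congrArg Prod.fst h
    have h2 : r *ᵥ v - (r * ω * r⁻¹) *ᵥ d = v := congrArg Prod.snd h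
    rw [h1] at h2
    -- commute : ω * r = r * ω
    have hcomm : ω * r = r * ω := by
      have h1' := congrArg (· * r) h1
      simp only [hinv] at h1'
      calc ω * r = r * ω * rᵀ * r := h1'.symm
        _ = r * ω * (rᵀ * r) := by rw [mul_assoc]
        _ = r * ω := by rw [hr.2, mul_one]
    -- ω (r v) = 0
    have hωrv : ω *ᵥ (r *ᵥ v) = 0 := by
      rw [Matrix.mulVec_mulVec, hcomm, ← Matrix.mulVec_mulVec, hωv,
        Matrix.mulVec_zero]
    -- ω² d = 0
    have hsq : ω *ᵥ (ω *ᵥ d) = 0 := by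
      have := congrArg (ω *ᵥ ·) h2
      simp only [Matrix.mulVec_sub, hωrv, hωv] at this
      linear_combination (norm := module) -this
    -- ω d = 0
    have hdot : (ω *ᵥ d) ⬝ᵥ (ω *ᵥ d) = 0 := by
      rw [Matrix.dotProduct_mulVec, ← Matrix.mulVec_transpose, hω,
        Matrix.neg_mulVec]
      simp [hsq]
    have hωd : ω *ᵥ d = 0 := by
      have := dotProduct_self_eq_zero.mp hdot
      exact this
    refine ⟨h1, ?_, hωd⟩
    rw [hωd, sub_zero] at h2
    exact h2
  · rintro ⟨h1, h2, h3⟩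
    simp [Ad, h1, h2, h3]
end

section
/- Let (L,p) ∈ so(n) × ℝⁿ satisfy L p = 0 (i.e. (L,p) is a proper point in the Cartan subset Δ*). Then an element (r,d) ∈ E(n) satisfies Ad*_{(r,d)}(L,p) = (L,p) if and only if r L r⁻¹ = L, r p = p, and μ(p,d) = 0. (Equivalently, the coadjoint isotropy subgroup at (L,p) is the semidirect product (H_p ∩ H_L) ⋉ ker τ_p.) -/
open Matrix

/-- Coadjoint isotropy subgroup at a proper point `(L,p) ∈ Δ*`. -/
theorem stmt3 {n : ℕ} (L : Mat n) (hL : IsSkew L) (p : Vec n) (hLp : L *ᵥ p = 0)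
    (r : Mat n) (hr : IsOrth r) (d : Vec n) :
    CoAd r d L p = (L, p) ↔ (r * L * r⁻¹ = L ∧ r *ᵥ p = p ∧ mu p d = 0) := by
  constructor
  · intro h
    have hp : r *ᵥ p = p := congrArg Prod.snd h
    have h1 : r * L * r⁻¹ + mu p d = L := by
      have := congrArg Prod.fst h
      simpa [CoAd, hp] using this
    have hpt : rᵀ *ᵥ p = p := by
      conv_lhs => rw [← hp, mulVec_mulVec, hr.2, one_mulVec]
    have hrinv : r⁻¹ = rᵀ := inv_eq_right_inv hr.1
    have h3 : (r * L * r⁻¹) *ᵥ p = 0 := by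
      rw [hrinv, ← mulVec_mulVec, hpt, ← mulVec_mulVec, hLp, mulVec_zero]
    have hmp : mu p d *ᵥ p = 0 := by
      have h2 : (r * L * r⁻¹) *ᵥ p + mu p d *ᵥ p = L *ᵥ p := by
        rw [← add_mulVec, h1]
      rw [h3, zero_add, hLp] at h2; exact h2
    have hkey : ∀ i, p i * (d ⬝ᵥ p) - d i * (p ⬝ᵥ p) = 0 := by
      intro i
      have := congrFun hmp i
      simp only [mu, sub_mulVec, smul_mulVec, Pi.smul_apply, Pi.sub_apply,
        Pi.zero_apply, smul_eq_mul] at this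
      have hv : ∀ (a b : Vec n), (vecMulVec a b *ᵥ p) i = a i * (b ⬝ᵥ p) := by
        intro a b
        simp [vecMulVec, mulVec, dotProduct, Finset.mul_sum, mul_assoc]
      rw [hv, hv] at this
      linarith
    have hmu : mu p d = 0 := by
      by_cases hp0 : p = 0
      · subst hp0
        ext i j
        simp [mu, vecMulVec]
      · have hpp : p ⬝ᵥ p ≠ 0 := fun hc => hp0 ((dotProduct_self_eq_zero).mp hc)
        ext i j
        simp only [mu, Pi.smul_apply, smul_eq_mul, Matrix.smul_apply, Matrix.sub_apply,
          vecMulVec_apply, Matrix.zero_apply]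
        have hi := hkey i
        have hj := hkey j
        have : (p i * d j - d i * p j) * (p ⬝ᵥ p) = 0 := by
          have e1 : p i * (d ⬝ᵥ p) = d i * (p ⬝ᵥ p) := by linarith
          have e2 : p j * (d ⬝ᵥ p) = d j * (p ⬝ᵥ p) := by linarith
          linear_combination p j * e1 - p i * e2
        have := mul_eq_zero.mp this
        rcases this with h' | h'
        · rw [show p i * d j - d i * p j = 0 from h']; ring
        · exact absurd h' hpp
    refine ⟨?_, hp, hmu⟩
    rw [hmu, add_zero] at h1
    exact h1
  · rintro ⟨h1, h2, h3⟩
    simp [CoAd, h2, h3, h1]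
end

section
/- Let (ω,v), (ω',v') ∈ so(n) × ℝⁿ satisfy ω v = 0 and ω' v' = 0. If there exists (r,d) ∈ E(n) with Ad_{(r,d)}(ω,v) = (ω',v'), then there exists r' ∈ O(n) with ω' = r' ω r'⁻¹ and v' = r' v. (The intersection of an adjoint orbit of E(n) with the Cartan subset Δ = {(ω,v) : ωv = 0} is a single O(n)-orbit.) -/
open Matrix

/-- The intersection of an adjoint orbit of `E(n)` with `Δ` is a single `O(n)`-orbit. -/
theorem stmt4 {n : ℕ} (ω : Mat n) (hω : IsSkew ω) (v : Vec n) (hωv : ω *ᵥ v = 0)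
    (ω' : Mat n) (hω' : IsSkew ω') (v' : Vec n) (hω'v' : ω' *ᵥ v' = 0)
    (r : Mat n) (hr : IsOrth r) (d : Vec n)
    (h : Ad r d ω v = (ω', v')) :
    ∃ r' : Mat n, IsOrth r' ∧ ω' = r' * ω * r'⁻¹ ∧ v' = r' *ᵥ v := by
  have hinv : r⁻¹ = rᵀ := inv_eq_left_inv hr.2
  have hω'eq : ω' = r * ω * r⁻¹ := (congrArg Prod.fst h).symm
  have hv'eq : v' = r *ᵥ v - ω' *ᵥ d := by
    have h2 := congrArg Prod.snd h
    simp only [Ad] at h2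
    rw [← h2, ← hω'eq]
  have horv : ω' *ᵥ (r *ᵥ v) = 0 := by
    rw [hω'eq, hinv, mulVec_mulVec, mul_assoc, mul_assoc, hr.2, mul_one,
      ← mulVec_mulVec, hωv, mulVec_zero]
  have hdd : ω' *ᵥ (ω' *ᵥ d) = 0 := by
    have h3 := hω'v'
    rw [hv'eq, mulVec_sub, horv, zero_sub, neg_eq_zero] at h3
    exact h3
  have key : ω' *ᵥ d = 0 := by
    have h0 : (ω' *ᵥ d) ⬝ᵥ (ω' *ᵥ d) = 0 := by
      have h4 : d ⬝ᵥ (ω' *ᵥ (ω' *ᵥ d)) = 0 := by rw [hdd, dotProduct_zero]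
      rw [dotProduct_mulVec] at h4
      have h5 : d ᵥ* ω' = -(ω' *ᵥ d) := by
        rw [← mulVec_transpose, hω', neg_mulVec]
      rw [h5, neg_dotProduct, neg_eq_zero] at h4
      exact h4
    exact dotProduct_self_eq_zero.mp h0
  exact ⟨r, hr, hω'eq, by rw [hv'eq, key, sub_zero]⟩
end

section
/- Let (L,p), (L',p') ∈ so(n) × ℝⁿ satisfy L p = 0 and L' p' = 0. If there exists (r,d) ∈ E(n) with Ad*_{(r,d)}(L,p) = (L',p'), then there exists r' ∈ O(n) with L' = r' L r'⁻¹ and p' = r' p. (The intersection of a coadjoint orbit of E(n) with the Cartan subset Δ* = {(L,p) : Lp = 0} is a single O(n)-orbit.) -/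
/-!
The `ℝⁿ`-component of `Ad*_{(r,d)}(L,p)` is `r p`, and `r L r⁻¹` kills `r p` whenever `L` kills `p`.
So `L' p' = 0` forces `μ(p',d) p' = ½((d·p') p' − |p'|² d) = 0`, i.e. `d` is parallel to `p'`
(or `p' = 0`), and then `μ(p',d) = 0`: the rotation part `r` alone already carries `(L,p)` to `(L',p')`.
-/

open Matrix

lemma mu_mulVec_self {n : ℕ} (p d : Vec n) :
    mu p d *ᵥ p = (1/2 : ℝ) • ((d ⬝ᵥ p) • p - (p ⬝ᵥ p) • d) := by
  funext i
  simp only [mu, mulVec, dotProduct, vecMulVec_apply, Matrix.sub_apply, Matrix.smul_apply,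
    Pi.smul_apply, Pi.sub_apply, smul_eq_mul]
  rw [Finset.sum_mul, Finset.sum_mul, ← Finset.sum_sub_distrib, Finset.mul_sum]
  exact Finset.sum_congr rfl fun x _ => by ring

lemma mu_eq_zero_of_mulVec_self {n : ℕ} {p d : Vec n} (h : mu p d *ᵥ p = 0) : mu p d = 0 := by
  have hparallel : (p ⬝ᵥ p) • d = (d ⬝ᵥ p) • p := by
    rw [mu_mulVec_self, smul_eq_zero, sub_eq_zero] at h
    exact (h.resolve_left (by norm_num)).symm
  have hscaled : (p ⬝ᵥ p) • mu p d = 0 := by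
    calc (p ⬝ᵥ p) • mu p d
        = (1/2 : ℝ) • (vecMulVec p ((p ⬝ᵥ p) • d) - vecMulVec ((p ⬝ᵥ p) • d) p) := by
          simp only [mu, smul_comm (p ⬝ᵥ p) (1/2 : ℝ), smul_sub, vecMulVec_smul, smul_vecMulVec]
      _ = 0 := by
          rw [hparallel, vecMulVec_smul, smul_vecMulVec, sub_self, smul_zero]
  rcases smul_eq_zero.1 hscaled with hp | hmu
  · rw [dotProduct_self_eq_zero.1 hp]
    simp [mu]
  · exact hmu

lemma conj_mulVec_mulVec {n : ℕ} {r : Mat n} (hr : IsUnit r.det) (L : Mat n) (p : Vec n) :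
    (r * L * r⁻¹) *ᵥ (r *ᵥ p) = r *ᵥ (L *ᵥ p) := by
  rw [mulVec_mulVec, mul_assoc (r * L), nonsing_inv_mul r hr, mul_one, mulVec_mulVec]

theorem stmt5_general {n : ℕ} (L : Mat n) (p : Vec n) (hLp : L *ᵥ p = 0)
    (L' : Mat n) (p' : Vec n) (hL'p' : L' *ᵥ p' = 0)
    (r : Mat n) (hr : IsOrth r) (d : Vec n)
    (h : CoAd r d L p = (L', p')) :
    ∃ r' : Mat n, IsOrth r' ∧ L' = r' * L * r'⁻¹ ∧ p' = r' *ᵥ p := by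
  obtain ⟨hL', hp'⟩ := Prod.mk.inj h
  have hconj : (r * L * r⁻¹) *ᵥ p' = 0 := by
    rw [← hp', conj_mulVec_mulVec (isUnit_det_of_left_inverse hr.2), hLp, mulVec_zero]
  have hmu : mu p' d = 0 := by
    apply mu_eq_zero_of_mulVec_self
    rwa [← hL', add_mulVec, hp', hconj, zero_add] at hL'p'
  exact ⟨r, hr, by rw [← hL', hp', hmu, add_zero], hp'.symm⟩

/-- The intersection of a coadjoint orbit of `E(n)` with `Δ*` is a single `O(n)`-orbit. -/
theorem stmt5 {n : ℕ} (L : Mat n) (hL : IsSkew L) (p : Vec n) (hLp : L *ᵥ p = 0)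
    (L' : Mat n) (hL' : IsSkew L') (p' : Vec n) (hL'p' : L' *ᵥ p' = 0)
    (r : Mat n) (hr : IsOrth r) (d : Vec n)
    (h : CoAd r d L p = (L', p')) :
    ∃ r' : Mat n, IsOrth r' ∧ L' = r' * L * r'⁻¹ ∧ p' = r' *ᵥ p :=
  stmt5_general L p hLp L' p' hL'p' r hr d h
end

section
/- There exists a bijection Φ from the set of adjoint orbits of E(n) (orbits of the Ad-action on so(n) × ℝⁿ) to the set of coadjoint orbits of E(n) (orbits of the Ad*-action on so(n) × ℝⁿ) such that for every (ω,v) ∈ so(n) × ℝⁿ with ω v = 0, Φ maps the adjoint orbit through (ω,v) to the coadjoint orbit through (ω,v). -/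
open Matrix

/-- Points of `so(n) × ℝⁿ`, with the first component constrained to be skew-symmetric. -/
def SkewVec (n : ℕ) := {ω : Mat n // IsSkew ω} × Vec n

/-- Lying in the same adjoint orbit of `E(n)`. -/
def adRel (n : ℕ) : SkewVec n → SkewVec n → Prop :=
  fun x y => ∃ (r : Mat n) (d : Vec n), IsOrth r ∧ Ad r d x.1.1 x.2 = (y.1.1, y.2)

/-- Lying in the same coadjoint orbit of `E(n)`. -/
def coadRel (n : ℕ) : SkewVec n → SkewVec n → Prop :=
  fun x y => ∃ (r : Mat n) (d : Vec n), IsOrth r ∧ CoAd r d x.1.1 x.2 = (y.1.1, y.2)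

section helpers
variable {n : ℕ}

lemma orth_inv {r : Mat n} (h : IsOrth r) : r⁻¹ = rᵀ :=
  Matrix.inv_eq_right_inv h.1

lemma orth_one : IsOrth (1 : Mat n) := by constructor <;> simp

lemma orth_mul {r s : Mat n} (hr : IsOrth r) (hs : IsOrth s) : IsOrth (r * s) := by
  constructor
  · rw [transpose_mul, mul_assoc, ← mul_assoc s, hs.1, one_mul, hr.1]
  · rw [transpose_mul, mul_assoc, ← mul_assoc rᵀ, hr.2, one_mul, hs.2]

lemma orth_transpose {r : Mat n} (hr : IsOrth r) : IsOrth rᵀ := by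
  constructor
  · rw [transpose_transpose, hr.2]
  · rw [transpose_transpose, hr.1]

lemma vecMulVec_mulVec (p d w : Vec n) : vecMulVec p d *ᵥ w = (d ⬝ᵥ w) • p := by
  ext i
  simp only [Matrix.mulVec, dotProduct, vecMulVec_apply, Pi.smul_apply, smul_eq_mul,
    Finset.sum_mul]
  exact Finset.sum_congr rfl fun j _ => by ring

lemma mu_mulVec (p d w : Vec n) :
    mu p d *ᵥ w = (1/2 : ℝ) • ((d ⬝ᵥ w) • p - (p ⬝ᵥ w) • d) := by
  simp [mu, Matrix.sub_mulVec, vecMulVec_mulVec, smul_mulVec]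

lemma conj_vecMulVec (A B : Mat n) (p d : Vec n) :
    A * vecMulVec p d * Bᵀ = vecMulVec (A *ᵥ p) (B *ᵥ d) := by
  ext i j
  simp only [Matrix.mul_apply, vecMulVec_apply, Matrix.mulVec, dotProduct,
    transpose_apply, Finset.sum_mul, Finset.mul_sum]
  exact Finset.sum_congr rfl fun k _ => Finset.sum_congr rfl fun l _ => by ring

lemma mu_conj (r : Mat n) (p d : Vec n) :
    r * mu p d * rᵀ = mu (r *ᵥ p) (r *ᵥ d) := by
  simp only [mu, Matrix.mul_smul, Matrix.smul_mul, mul_sub, sub_mul,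
    conj_vecMulVec]

lemma mu_add (p d e : Vec n) : mu p (d + e) = mu p d + mu p e := by
  ext i j
  simp [mu, vecMulVec_apply]; ring

lemma mu_zero (p : Vec n) : mu p 0 = 0 := by
  ext i j; simp [mu, vecMulVec_apply]

lemma mu_skew (p d : Vec n) : IsSkew (mu p d) := by
  ext i j
  simp [IsSkew, mu, vecMulVec_apply]; ring

lemma skew_sq_mulVec {ω : Mat n} (hω : IsSkew ω) {x : Vec n}
    (h : ω *ᵥ (ω *ᵥ x) = 0) : ω *ᵥ x = 0 := by
  have hvm : (ω *ᵥ x) ᵥ* ω = 0 := by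
    have htr := Matrix.vecMul_transpose ωᵀ (ω *ᵥ x)
    rw [transpose_transpose] at htr
    rw [htr, hω, Matrix.neg_mulVec, h, neg_zero]
  have key : (ω *ᵥ x) ⬝ᵥ (ω *ᵥ x) = 0 := by
    rw [Matrix.dotProduct_mulVec, hvm, zero_dotProduct]
  exact dotProduct_self_eq_zero.mp key

lemma exists_ad_delta {ω : Mat n} (hω : IsSkew ω) (v : Vec n) :
    ∃ d : Vec n, ω *ᵥ (v - ω *ᵥ d) = 0 := by
  set f := ω.mulVecLin with hf
  have hker : LinearMap.ker (f ∘ₗ f) = LinearMap.ker f := by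
    apply le_antisymm
    · intro x hx
      simp only [LinearMap.mem_ker, LinearMap.comp_apply, Matrix.mulVecLin_apply] at hx ⊢
      exact skew_sq_mulVec hω hx
    · intro x hx
      simp only [LinearMap.mem_ker, Matrix.mulVecLin_apply] at hx ⊢
      simp [Matrix.mulVecLin_apply, hx]
  have hrange : LinearMap.range (f ∘ₗ f) = LinearMap.range f := by
    apply Submodule.eq_of_le_of_finrank_eq (LinearMap.range_comp_le_range f f)
    have h1 := LinearMap.finrank_range_add_finrank_ker (f ∘ₗ f)
    have h2 := LinearMap.finrank_range_add_finrank_ker f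
    rw [hker] at h1
    omega
  have hv : ω *ᵥ v ∈ LinearMap.range f := ⟨v, rfl⟩
  rw [← hrange] at hv
  obtain ⟨d, hd⟩ := hv
  refine ⟨d, ?_⟩
  rw [hf] at hd
  simp only [LinearMap.comp_apply, Matrix.mulVecLin_apply] at hd
  rw [Matrix.mulVec_sub, hd, sub_self]

lemma exists_coad_delta {L : Mat n} (hL : IsSkew L) (p : Vec n) :
    ∃ d : Vec n, (L + mu p d) *ᵥ p = 0 := by
  have hLp : (L *ᵥ p) ⬝ᵥ p = 0 := by
    have hvm : p ᵥ* L = -(L *ᵥ p) := by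
      have htr := Matrix.vecMul_transpose Lᵀ p
      rw [transpose_transpose] at htr
      rw [htr, hL, Matrix.neg_mulVec]
    have h1 : p ⬝ᵥ (L *ᵥ p) = -((L *ᵥ p) ⬝ᵥ p) := by
      rw [Matrix.dotProduct_mulVec, hvm, neg_dotProduct]
    have h2 : p ⬝ᵥ (L *ᵥ p) = (L *ᵥ p) ⬝ᵥ p := dotProduct_comm _ _
    linarith [h1, h2.symm]
  by_cases hp : p = 0
  · exact ⟨0, by simp [hp]⟩
  · refine ⟨(2 / (p ⬝ᵥ p)) • (L *ᵥ p), ?_⟩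
    have hpp : p ⬝ᵥ p ≠ 0 := fun h => hp (dotProduct_self_eq_zero.mp h)
    rw [Matrix.add_mulVec, mu_mulVec]
    have hd : ((2 / (p ⬝ᵥ p)) • (L *ᵥ p)) ⬝ᵥ p = 0 := by
      rw [smul_dotProduct, hLp, smul_zero]
    rw [hd]
    simp only [zero_smul, zero_sub, smul_neg, smul_smul]
    have : (1/2 : ℝ) * ((p ⬝ᵥ p) * (2 / (p ⬝ᵥ p))) = 1 := by
      field_simp
    rw [this, one_smul, add_neg_cancel]

end helpers

section actions
variable {n : ℕ}

lemma mu_zero_left (d : Vec n) : mu 0 d = 0 := by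
  ext i j; simp [mu, vecMulVec_apply]

lemma mu_self (p : Vec n) : mu p p = 0 := by
  ext i j; simp [mu, vecMulVec_apply, mul_comm]

lemma mu_smul_right (c : ℝ) (p q : Vec n) : mu p (c • q) = c • mu p q := by
  ext i j; simp [mu, vecMulVec_apply]; ring

lemma Ad_one (ω : Mat n) (v : Vec n) : Ad 1 0 ω v = (ω, v) := by
  simp [Ad]

lemma CoAd_one (L : Mat n) (p : Vec n) : CoAd 1 0 L p = (L, p) := by
  simp [CoAd, mu_zero]

lemma Ad_comp {r₁ r₂ : Mat n} (h₁ : IsOrth r₁) (h₂ : IsOrth r₂) (d₁ d₂ : Vec n)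
    (ω : Mat n) (v : Vec n) :
    Ad r₂ d₂ (Ad r₁ d₁ ω v).1 (Ad r₁ d₁ ω v).2 = Ad (r₂ * r₁) (d₂ + r₂ *ᵥ d₁) ω v := by
  simp only [Ad, orth_inv h₁, orth_inv h₂, orth_inv (orth_mul h₂ h₁), transpose_mul,
    Matrix.mulVec_sub, Matrix.mulVec_add, Matrix.mulVec_mulVec, Matrix.mul_assoc,
    h₂.2, Matrix.mul_one, Prod.mk.injEq]
  constructor <;> first | trivial | abel

lemma CoAd_comp {r₁ r₂ : Mat n} (h₁ : IsOrth r₁) (h₂ : IsOrth r₂) (d₁ d₂ : Vec n)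
    (L : Mat n) (p : Vec n) :
    CoAd r₂ d₂ (CoAd r₁ d₁ L p).1 (CoAd r₁ d₁ L p).2 =
      CoAd (r₂ * r₁) (d₂ + r₂ *ᵥ d₁) L p := by
  have hconj : r₂ * (r₁ * L * r₁ᵀ + mu (r₁ *ᵥ p) d₁) * r₂ᵀ
      = r₂ * r₁ * L * (r₂ * r₁)ᵀ + mu ((r₂ * r₁) *ᵥ p) (r₂ *ᵥ d₁) := by
    rw [Matrix.mul_add, Matrix.add_mul, mu_conj, transpose_mul]
    rw [← Matrix.mulVec_mulVec]
    congr 1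
    simp [Matrix.mul_assoc]
  simp only [CoAd, orth_inv h₁, orth_inv h₂, orth_inv (orth_mul h₂ h₁),
    Matrix.mulVec_mulVec, hconj, mu_add, Prod.mk.injEq]
  constructor <;> first | trivial | abel

end actions

section rels
variable {n : ℕ}

lemma adRel_refl (x : SkewVec n) : adRel n x x :=
  ⟨1, 0, orth_one, by rw [Ad_one]⟩

lemma coadRel_refl (x : SkewVec n) : coadRel n x x :=
  ⟨1, 0, orth_one, by rw [CoAd_one]⟩

lemma adRel_trans {x y z : SkewVec n} (hxy : adRel n x y) (hyz : adRel n y z) :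
    adRel n x z := by
  obtain ⟨r₁, d₁, h₁, e₁⟩ := hxy
  obtain ⟨r₂, d₂, h₂, e₂⟩ := hyz
  refine ⟨r₂ * r₁, d₂ + r₂ *ᵥ d₁, orth_mul h₂ h₁, ?_⟩
  rw [← Ad_comp h₁ h₂, e₁]
  simpa using e₂

lemma coadRel_trans {x y z : SkewVec n} (hxy : coadRel n x y) (hyz : coadRel n y z) :
    coadRel n x z := by
  obtain ⟨r₁, d₁, h₁, e₁⟩ := hxy
  obtain ⟨r₂, d₂, h₂, e₂⟩ := hyz
  refine ⟨r₂ * r₁, d₂ + r₂ *ᵥ d₁, orth_mul h₂ h₁, ?_⟩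
  rw [← CoAd_comp h₁ h₂, e₁]
  simpa using e₂

lemma adRel_symm {x y : SkewVec n} (hxy : adRel n x y) : adRel n y x := by
  obtain ⟨r, d, hr, e⟩ := hxy
  refine ⟨rᵀ, -(rᵀ *ᵥ d), orth_transpose hr, ?_⟩
  have e1 : y.1.1 = (Ad r d x.1.1 x.2).1 := by rw [e]
  have e2 : y.2 = (Ad r d x.1.1 x.2).2 := by rw [e]
  rw [e1, e2, Ad_comp hr (orth_transpose hr), hr.2, neg_add_cancel, Ad_one]

lemma coadRel_symm {x y : SkewVec n} (hxy : coadRel n x y) : coadRel n y x := by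
  obtain ⟨r, d, hr, e⟩ := hxy
  refine ⟨rᵀ, -(rᵀ *ᵥ d), orth_transpose hr, ?_⟩
  have e1 : y.1.1 = (CoAd r d x.1.1 x.2).1 := by rw [e]
  have e2 : y.2 = (CoAd r d x.1.1 x.2).2 := by rw [e]
  rw [e1, e2, CoAd_comp hr (orth_transpose hr), hr.2, neg_add_cancel, CoAd_one]

end rels

section delta
variable {n : ℕ}

lemma ad_to_delta (x : SkewVec n) :
    ∃ y : SkewVec n, adRel n x y ∧ y.1.1 *ᵥ y.2 = 0 := by
  obtain ⟨d, hd⟩ := exists_ad_delta x.1.2 x.2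
  refine ⟨(x.1, x.2 - x.1.1 *ᵥ d), ⟨1, d, orth_one, ?_⟩, hd⟩
  simp [Ad]

lemma coad_to_delta (x : SkewVec n) :
    ∃ y : SkewVec n, coadRel n x y ∧ y.1.1 *ᵥ y.2 = 0 := by
  obtain ⟨d, hd⟩ := exists_coad_delta x.1.2 x.2
  have hskew : IsSkew (x.1.1 + mu x.2 d) := by
    have h1 := x.1.2
    have h2 := mu_skew x.2 d
    unfold IsSkew at *
    rw [transpose_add, h1, h2, neg_add]
  refine ⟨(⟨x.1.1 + mu x.2 d, hskew⟩, x.2), ⟨1, d, orth_one, ?_⟩, hd⟩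
  simp [CoAd]

lemma delta_ad_to_orth {x y : SkewVec n} (hx : x.1.1 *ᵥ x.2 = 0) (hy : y.1.1 *ᵥ y.2 = 0)
    (h : adRel n x y) :
    ∃ r : Mat n, IsOrth r ∧ r * x.1.1 * rᵀ = y.1.1 ∧ r *ᵥ x.2 = y.2 := by
  obtain ⟨r, d, hr, e⟩ := h
  rw [Ad, orth_inv hr] at e
  have e1 : r * x.1.1 * rᵀ = y.1.1 := congrArg Prod.fst e
  have e2 : r *ᵥ x.2 - (r * x.1.1 * rᵀ) *ᵥ d = y.2 := congrArg Prod.snd e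
  rw [e1] at e2
  have hcom : y.1.1 * r = r * x.1.1 := by
    rw [← e1, Matrix.mul_assoc (r * x.1.1) rᵀ r, hr.2, Matrix.mul_one]
  have h0 : y.1.1 *ᵥ (r *ᵥ x.2) = 0 := by
    rw [Matrix.mulVec_mulVec, hcom, ← Matrix.mulVec_mulVec, hx, Matrix.mulVec_zero]
  have hdiff : y.1.1 *ᵥ d = r *ᵥ x.2 - y.2 := by rw [← e2]; abel
  have hsq : y.1.1 *ᵥ (y.1.1 *ᵥ d) = 0 := by
    rw [hdiff, Matrix.mulVec_sub, h0, hy, sub_self]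
  have hzd := skew_sq_mulVec y.1.2 hsq
  exact ⟨r, hr, e1, by rw [← e2, hzd, sub_zero]⟩

lemma delta_coad_to_orth {x y : SkewVec n} (hx : x.1.1 *ᵥ x.2 = 0) (hy : y.1.1 *ᵥ y.2 = 0)
    (h : coadRel n x y) :
    ∃ r : Mat n, IsOrth r ∧ r * x.1.1 * rᵀ = y.1.1 ∧ r *ᵥ x.2 = y.2 := by
  obtain ⟨r, d, hr, e⟩ := h
  rw [CoAd, orth_inv hr] at e
  have e2 : r *ᵥ x.2 = y.2 := congrArg Prod.snd e
  have e1 : r * x.1.1 * rᵀ + mu y.2 d = y.1.1 := by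
    have := congrArg Prod.fst e
    rw [e2] at this
    exact this
  have hA : (r * x.1.1 * rᵀ) *ᵥ y.2 = 0 := by
    have hrr : r * x.1.1 * rᵀ * r = r * x.1.1 := by
      rw [Matrix.mul_assoc (r * x.1.1) rᵀ r, hr.2, Matrix.mul_one]
    rw [← e2, Matrix.mulVec_mulVec, hrr, ← Matrix.mulVec_mulVec, hx, Matrix.mulVec_zero]
  have hmu : mu y.2 d *ᵥ y.2 = 0 := by
    have h2 : (r * x.1.1 * rᵀ + mu y.2 d) *ᵥ y.2 = 0 := by rw [e1, hy]
    rw [Matrix.add_mulVec, hA, zero_add] at h2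
    exact h2
  have hmu0 : mu y.2 d = 0 := by
    by_cases hp : y.2 = 0
    · rw [hp, mu_zero_left]
    · rw [mu_mulVec] at hmu
      have hpp : y.2 ⬝ᵥ y.2 ≠ 0 := fun hc => hp (dotProduct_self_eq_zero.mp hc)
      have h3 : (d ⬝ᵥ y.2) • y.2 - (y.2 ⬝ᵥ y.2) • d = 0 := by
        have h4 := congrArg (fun w : Vec n => (2 : ℝ) • w) hmu
        simpa [smul_smul] using h4
      have heq : (y.2 ⬝ᵥ y.2) • d = (d ⬝ᵥ y.2) • y.2 := (sub_eq_zero.mp h3).symm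
      have hd : d = ((y.2 ⬝ᵥ y.2)⁻¹ * (d ⬝ᵥ y.2)) • y.2 := by
        have h5 := congrArg (fun w : Vec n => (y.2 ⬝ᵥ y.2)⁻¹ • w) heq
        simpa [smul_smul, inv_mul_cancel₀ hpp] using h5
      rw [hd, mu_smul_right, mu_self, smul_zero]
  refine ⟨r, hr, ?_, e2⟩
  rw [← e1, hmu0, add_zero]

lemma orth_to_ad {x y : SkewVec n}
    (h : ∃ r : Mat n, IsOrth r ∧ r * x.1.1 * rᵀ = y.1.1 ∧ r *ᵥ x.2 = y.2) :
    adRel n x y := by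
  obtain ⟨r, hr, h1, h2⟩ := h
  exact ⟨r, 0, hr, by rw [Ad, orth_inv hr, h1, h2, Matrix.mulVec_zero, sub_zero]⟩

lemma orth_to_coad {x y : SkewVec n}
    (h : ∃ r : Mat n, IsOrth r ∧ r * x.1.1 * rᵀ = y.1.1 ∧ r *ᵥ x.2 = y.2) :
    coadRel n x y := by
  obtain ⟨r, hr, h1, h2⟩ := h
  exact ⟨r, 0, hr, by rw [CoAd, orth_inv hr, mu_zero, add_zero, h1, h2]⟩

lemma delta_ad_iff_coad {x y : SkewVec n} (hx : x.1.1 *ᵥ x.2 = 0)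
    (hy : y.1.1 *ᵥ y.2 = 0) : adRel n x y ↔ coadRel n x y :=
  ⟨fun h => orth_to_coad (delta_ad_to_orth hx hy h),
   fun h => orth_to_ad (delta_coad_to_orth hx hy h)⟩

end delta

section main
variable {n : ℕ}

noncomputable def NA (x : SkewVec n) : SkewVec n := (ad_to_delta x).choose
lemma NA_rel (x : SkewVec n) : adRel n x (NA x) := (ad_to_delta x).choose_spec.1
lemma NA_delta (x : SkewVec n) : (NA x).1.1 *ᵥ (NA x).2 = 0 := (ad_to_delta x).choose_spec.2

noncomputable def NC (x : SkewVec n) : SkewVec n := (coad_to_delta x).choose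
lemma NC_rel (x : SkewVec n) : coadRel n x (NC x) := (coad_to_delta x).choose_spec.1
lemma NC_delta (x : SkewVec n) : (NC x).1.1 *ᵥ (NC x).2 = 0 := (coad_to_delta x).choose_spec.2

end main


/-- There is a bijection between the set of adjoint orbits and the set of coadjoint orbits
of `E(n)`, mapping the adjoint orbit through any point `(ω,v)` of the Cartan subset `Δ`
to the coadjoint orbit through the same point. -/
theorem stmt7 (n : ℕ) :
    ∃ Φ : Quot (adRel n) → Quot (coadRel n), Function.Bijective Φ ∧
      ∀ (ω : Mat n) (hω : IsSkew ω) (v : Vec n), ω *ᵥ v = 0 →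
        Φ (Quot.mk _ (⟨ω, hω⟩, v)) = Quot.mk _ (⟨ω, hω⟩, v) := by
  refine ⟨Quot.lift (fun x => Quot.mk (coadRel n) (NA x)) ?_, ?_, ?_⟩
  · intro a b hab
    apply Quot.sound
    have h : adRel n (NA a) (NA b) :=
      adRel_trans (adRel_symm (NA_rel a)) (adRel_trans hab (NA_rel b))
    exact (delta_ad_iff_coad (NA_delta a) (NA_delta b)).mp h
  · rw [Function.bijective_iff_has_inverse]
    refine ⟨Quot.lift (fun x => Quot.mk (adRel n) (NC x)) ?_, ?_, ?_⟩
    · intro a b hab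
      apply Quot.sound
      have h : coadRel n (NC a) (NC b) :=
        coadRel_trans (coadRel_symm (NC_rel a)) (coadRel_trans hab (NC_rel b))
      exact (delta_ad_iff_coad (NC_delta a) (NC_delta b)).mpr h
    · intro q
      induction q using Quot.ind with
      | _ x =>
        show Quot.mk (adRel n) (NC (NA x)) = Quot.mk (adRel n) x
        apply Quot.sound
        apply adRel_symm
        refine adRel_trans (NA_rel x) ?_
        exact (delta_ad_iff_coad (NA_delta x) (NC_delta (NA x))).mpr (NC_rel (NA x))
    · intro q
      induction q using Quot.ind with
      | _ x =>
        show Quot.mk (coadRel n) (NA (NC x)) = Quot.mk (coadRel n) x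
        apply Quot.sound
        apply coadRel_symm
        refine coadRel_trans (NC_rel x) ?_
        exact (delta_ad_iff_coad (NC_delta x) (NA_delta (NC x))).mp (NA_rel (NC x))
  · intro ω hω v hv
    show Quot.mk (coadRel n) (NA (⟨ω, hω⟩, v)) = Quot.mk (coadRel n) (⟨ω, hω⟩, v)
    apply Quot.sound
    apply coadRel_symm
    exact (delta_ad_iff_coad hv (NA_delta (⟨ω, hω⟩, v))).mp (NA_rel (⟨ω, hω⟩, v))
end

section
/- For any (ω,v) ∈ so(n) × ℝⁿ: (i) an element of the form (1,d) ∈ E(n) satisfies Ad_{(1,d)}(ω,v) = (ω,v) if and only if ω d = 0; and (ii) the image of the adjoint isotropy subgroup {(r,d) ∈ E(n) : Ad_{(r,d)}(ω,v) = (ω,v)} under the projection (r,d) ↦ r is exactly {r ∈ O(n) : r ω r⁻¹ = ω and r v − v ∈ range(ω)}. (This is the exact sequence {0} → ker ω → G_{(ω,v)} → (H_ω)_{[v]} → {e}.) -/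
open Matrix

/-- The exact sequence `{0} → ker ω → G_{(ω,v)} → (H_ω)_{[v]} → {e}` for the
adjoint isotropy subgroup. -/
theorem stmt9 {n : ℕ} (ω : Mat n) (hω : IsSkew ω) (v : Vec n) :
    (∀ d : Vec n, Ad 1 d ω v = (ω, v) ↔ ω *ᵥ d = 0) ∧
    {r : Mat n | IsOrth r ∧ ∃ d : Vec n, Ad r d ω v = (ω, v)} =
      {r : Mat n | IsOrth r ∧ r * ω * r⁻¹ = ω ∧ ∃ x : Vec n, ω *ᵥ x = r *ᵥ v - v} := by
  constructor
  · intro d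
    simp only [Ad, inv_one, one_mul, mul_one, one_mulVec, Prod.mk.injEq, true_and]
    constructor
    · intro h
      have := congrArg (fun w => v - w) h
      simpa using this
    · intro h; simp [h]
  · ext r
    simp only [Set.mem_setOf_eq, Ad, Prod.mk.injEq]
    constructor
    · rintro ⟨ho, d, h1, h2⟩
      refine ⟨ho, h1, d, ?_⟩
      rw [h1] at h2
      have := congrArg (fun w => r *ᵥ v - w) h2
      simpa using this
    · rintro ⟨ho, h1, x, hx⟩
      refine ⟨ho, x, h1, ?_⟩
      rw [h1, hx]
      abel
end

section
/- For any (L,p) ∈ so(n) × ℝⁿ: (i) an element of the form (1,d) ∈ E(n) satisfies Ad*_{(1,d)}(L,p) = (L,p) if and only if μ(p,d) = 0; and (ii) the image of the coadjoint isotropy subgroup {(r,d) ∈ E(n) : Ad*_{(r,d)}(L,p) = (L,p)} under the projection (r,d) ↦ r is exactly {r ∈ O(n) : r p = p and r L r⁻¹ − L ∈ {μ(p,d) : d ∈ ℝⁿ}}. (This is the exact sequence {0} → ker τ_p → G_{(L,p)} → (H_p)_{ι*_p L} → {e}.) -/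
open Matrix

lemma mu_neg {n : ℕ} (p d : Vec n) : mu p (-d) = -mu p d := by
  rw [mu, mu, vecMulVec_neg, neg_vecMulVec, neg_sub_neg, ← smul_neg, neg_sub]

lemma coAd_eq_self_iff {n : ℕ} (r : Mat n) (d : Vec n) (L : Mat n) (p : Vec n) :
    CoAd r d L p = (L, p) ↔ r *ᵥ p = p ∧ r * L * r⁻¹ - L = mu p (-d) := by
  rw [CoAd, Prod.mk.injEq, and_comm]
  refine and_congr_right fun hp => ?_
  rw [hp, mu_neg, sub_eq_iff_eq_add, neg_add_eq_sub, eq_sub_iff_add_eq]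

lemma coAd_one_eq_self_iff {n : ℕ} (d : Vec n) (L : Mat n) (p : Vec n) :
    CoAd 1 d L p = (L, p) ↔ mu p d = 0 := by
  simp [coAd_eq_self_iff, mu_neg, eq_comm]

theorem stmt10_general {n : ℕ} (L : Mat n) (p : Vec n) :
    (∀ d : Vec n, CoAd 1 d L p = (L, p) ↔ mu p d = 0) ∧
    {r : Mat n | IsOrth r ∧ ∃ d : Vec n, CoAd r d L p = (L, p)} =
      {r : Mat n | IsOrth r ∧ r *ᵥ p = p ∧ ∃ d : Vec n, r * L * r⁻¹ - L = mu p d} := by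
  refine ⟨fun d => coAd_one_eq_self_iff d L p, ?_⟩
  ext r
  simp only [Set.mem_ofPred_eq, coAd_eq_self_iff, exists_and_left]
  rw [neg_surjective.exists (p := fun d => r * L * r⁻¹ - L = mu p d)]

/-- The exact sequence `{0} → ker τ_p → G_{(L,p)} → (H_p)_{ι*_p L} → {e}` for the
coadjoint isotropy subgroup. -/
theorem stmt10 {n : ℕ} (L : Mat n) (hL : IsSkew L) (p : Vec n) :
    (∀ d : Vec n, CoAd 1 d L p = (L, p) ↔ mu p d = 0) ∧
    {r : Mat n | IsOrth r ∧ ∃ d : Vec n, CoAd r d L p = (L, p)} =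
      {r : Mat n | IsOrth r ∧ r *ᵥ p = p ∧ ∃ d : Vec n, r * L * r⁻¹ - L = mu p d} :=
  stmt10_general L p
end

section
/- For any ω ∈ so(n), the adjoint orbit of E(n) through (ω,0) is exactly the set {(ω',v') ∈ so(n) × ℝⁿ : (∃ r ∈ O(n), ω' = r ω r⁻¹) and v' ∈ range(ω')}. (Hence this adjoint orbit, via the projection (ω',v') ↦ ω', is a vector bundle over the O(n)-conjugation orbit of ω, with fibre over ω' the subspace range(ω'); this is the vector bundle of Theorem on the orbit bijection, Part 1.) -/
open Matrix

theorem Ad_zero_right {n : ℕ} (r : Mat n) (d : Vec n) (ω : Mat n) :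
    Ad r d ω 0 = (r * ω * r⁻¹, (r * ω * r⁻¹) *ᵥ (-d)) := by
  simp [Ad, Matrix.mulVec_neg]

theorem stmt11_general {n : ℕ} (ω : Mat n) :
    {x : Mat n × Vec n | ∃ (r : Mat n) (d : Vec n), IsOrth r ∧ Ad r d ω 0 = x} =
      {x : Mat n × Vec n |
        (∃ r : Mat n, IsOrth r ∧ x.1 = r * ω * r⁻¹) ∧ ∃ u : Vec n, x.1 *ᵥ u = x.2} := by
  ext ⟨ω', v'⟩
  simp only [Set.mem_ofPred_eq, Ad_zero_right, Prod.mk.injEq]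
  constructor
  · rintro ⟨r, d, hr, rfl, rfl⟩
    exact ⟨⟨r, hr, rfl⟩, -d, rfl⟩
  · rintro ⟨⟨r, hr, rfl⟩, u, rfl⟩
    exact ⟨r, -u, hr, rfl, by rw [neg_neg]⟩

/-- The adjoint orbit of `E(n)` through `(ω,0)` is the set of pairs `(ω',v')` with `ω'`
orthogonally conjugate to `ω` and `v' ∈ range ω'`. -/
theorem stmt11 {n : ℕ} (ω : Mat n) (hω : IsSkew ω) :
    {x : Mat n × Vec n | ∃ (r : Mat n) (d : Vec n), IsOrth r ∧ Ad r d ω 0 = x} =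
      {x : Mat n × Vec n |
        (∃ r : Mat n, IsOrth r ∧ x.1 = r * ω * r⁻¹) ∧ ∃ u : Vec n, x.1 *ᵥ u = x.2} :=
  stmt11_general ω
end

section
/- Two skew-symmetric n×n real matrices ω₁ and ω₂ lie in the same O(n)-conjugation orbit (i.e. there exists r ∈ O(n) with ω₂ = r ω₁ r⁻¹) if and only if they have the same characteristic polynomial. (The adjoint orbits of O(n) are the isospectral sets of skew-symmetric matrices.) -/
open Matrix

/-!
Over `ℂ` a real skew-symmetric `ω` is skew-Hermitian, so `I • ω` is Hermitian, unitarily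
diagonalisable, with eigenvalues determined by the characteristic polynomial. Hence equal
characteristic polynomials give a unitary `V` with `V ω₁ = ω₂ V`. Writing `V = S + i T`, both
`S` and `T` intertwine `ω₁` and `ω₂`, and since `t ↦ det (S + t T)` is a real polynomial that
does not vanish at `i`, some real `Y = S + t T` is an invertible intertwiner. Finally `P = Yᵀ Y`
is positive definite and commutes with `ω₁`, so `r = Y P^{-1/2}` is orthogonal and still
intertwines `ω₁` and `ω₂`.
-/

open Polynomial Unitary

namespace Matrix

variable {m : Type*} [Fintype m] [DecidableEq m]

lemma charpoly_smul_eq_of_charpoly_eq {K : Type*} [Field K] [Infinite K] {A B : Matrix m m K}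
    (h : A.charpoly = B.charpoly) (c : K) : (c • A).charpoly = (c • B).charpoly := by
  rcases eq_or_ne c 0 with rfl | hc
  · simp
  have eval_charpoly_smul (M : Matrix m m K) (t : K) :
      (c • M).charpoly.eval t = c ^ Fintype.card m * M.charpoly.eval (c⁻¹ * t) := by
    have : scalar m t - c • M = c • (scalar m (c⁻¹ * t) - M) := by
      rw [smul_sub, scalar_apply, scalar_apply, ← diagonal_smul]
      simp [Pi.smul_def, mul_inv_cancel_left₀ hc]
    rw [eval_charpoly, eval_charpoly, this, det_smul]
  exact Polynomial.funext fun t => by rw [eval_charpoly_smul, eval_charpoly_smul, h]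

lemma IsHermitian.exists_unitary_conj_of_charpoly_eq {𝕜 : Type*} [RCLike 𝕜]
    {A B : Matrix m m 𝕜} (hA : A.IsHermitian) (hB : B.IsHermitian)
    (h : A.charpoly = B.charpoly) : ∃ U ∈ unitary (Matrix m m 𝕜), B = U * A * star U := by
  have heig := (hA.eigenvalues_eq_eigenvalues_iff hB).mpr h
  set U := hB.eigenvectorUnitary * star hA.eigenvectorUnitary
  refine ⟨U, U.2, ?_⟩
  calc B = conjStarAlgAut 𝕜 _ hB.eigenvectorUnitary (diagonal (RCLike.ofReal ∘ hB.eigenvalues)) :=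
        hB.spectral_theorem
    _ = conjStarAlgAut 𝕜 _ U A := by
        rw [← heig, ← hA.conjStarAlgAut_star_eigenvectorUnitary, conjStarAlgAut_mul_apply]
    _ = U * A * star U := conjStarAlgAut_apply _ _

lemma exists_unitary_conj_of_conjTranspose_eq_neg {A B : Matrix m m ℂ} (hA : Aᴴ = -A)
    (hB : Bᴴ = -B) (h : A.charpoly = B.charpoly) :
    ∃ U ∈ unitary (Matrix m m ℂ), B = U * A * star U := by
  have isHermitian_I_smul {M : Matrix m m ℂ} (hM : Mᴴ = -M) : (Complex.I • M).IsHermitian := by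
    simp [IsHermitian, conjTranspose_smul, hM]
  obtain ⟨U, hU, hIB⟩ := (isHermitian_I_smul hA).exists_unitary_conj_of_charpoly_eq
    (isHermitian_I_smul hB) (charpoly_smul_eq_of_charpoly_eq h _)
  refine ⟨U, hU, smul_right_injective _ Complex.I_ne_zero ?_⟩
  simpa only [Matrix.mul_smul, Matrix.smul_mul] using hIB

lemma exists_complex_intertwiner_of_charpoly_eq {A B : Matrix m m ℝ} (hA : Aᵀ = -A)
    (hB : Bᵀ = -B) (h : A.charpoly = B.charpoly) :
    ∃ V : Matrix m m ℂ, V.det ≠ 0 ∧ V * A.map Complex.ofRealHom = B.map Complex.ofRealHom * V := by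
  have conjTranspose_map {M : Matrix m m ℝ} (hM : Mᵀ = -M) :
      (M.map Complex.ofRealHom)ᴴ = -M.map Complex.ofRealHom := by
    ext i j
    simp [show M j i = -M i j from congr_fun₂ hM i j]
  obtain ⟨U, hU, hBU⟩ := exists_unitary_conj_of_conjTranspose_eq_neg (conjTranspose_map hA)
    (conjTranspose_map hB) (by rw [charpoly_map, charpoly_map, h])
  refine ⟨U, (UnitaryGroup.det_isUnit ⟨U, hU⟩).ne_zero, ?_⟩
  rw [hBU, Matrix.mul_assoc, Matrix.mul_assoc, star_mul_self_of_mem hU, Matrix.mul_one]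

lemma exists_real_intertwiner_of_complex {A B : Matrix m m ℝ} {V : Matrix m m ℂ} (hV : V.det ≠ 0)
    (h : V * A.map Complex.ofRealHom = B.map Complex.ofRealHom * V) :
    ∃ Y : Matrix m m ℝ, Y.det ≠ 0 ∧ Y * A = B * Y := by
  set S := V.map Complex.re
  set T := V.map Complex.im
  have hS : S * A = B * S := by
    ext i j
    simpa [S, mul_apply, Complex.re_sum] using congr_arg Complex.re (congr_fun₂ h i j)
  have hT : T * A = B * T := by
    ext i j
    simpa [T, mul_apply, Complex.im_sum] using congr_arg Complex.im (congr_fun₂ h i j)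
  set p : ℝ[X] := (S.map C + (X : ℝ[X]) • T.map C).det
  have eval_p (t : ℝ) : p.eval t = (S + t • T).det := by
    rw [← coe_evalRingHom, RingHom.map_det]
    congr 1
    ext i j
    simp [mul_comm t]
  have eval_p_I : p.eval₂ Complex.ofRealHom Complex.I = V.det := by
    rw [← coe_eval₂RingHom, RingHom.map_det]
    congr 1
    ext i j
    apply Complex.ext <;> simp [S, T]
  obtain ⟨t, ht⟩ : ∃ t : ℝ, p.eval t ≠ 0 := by
    by_contra! hp
    have : p = 0 := Polynomial.funext (by simpa using hp)
    exact hV (by rw [← eval_p_I, this, eval₂_zero])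
  refine ⟨S + t • T, eval_p t ▸ ht, ?_⟩
  rw [add_mul, mul_add, Matrix.smul_mul, Matrix.mul_smul, hS, hT]

open ComplexOrder in
lemma PosDef.cfc_inv_sqrt_mul_self_mul_cfc_inv_sqrt {𝕜 : Type*} [RCLike 𝕜] {P : Matrix m m 𝕜}
    (hP : P.PosDef) :
    cfc (fun x => (√x)⁻¹) P * P * cfc (fun x => (√x)⁻¹) P = 1 := by
  have hspec : ∀ x ∈ spectrum ℝ P, 0 < x := by
    rw [hP.isHermitian.spectrum_real_eq_range_eigenvalues]
    rintro _ ⟨i, rfl⟩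
    exact hP.eigenvalues_pos i
  have hcont (f : ℝ → ℝ) : ContinuousOn f (spectrum ℝ P) := P.finite_real_spectrum.continuousOn f
  nth_rw 2 [← cfc_id' ℝ P hP.isHermitian.isSelfAdjoint]
  rw [← cfc_mul _ _ _ (hcont _) (hcont _), ← cfc_mul _ _ _ (hcont _) (hcont _),
    ← cfc_const_one ℝ P hP.isHermitian.isSelfAdjoint]
  refine cfc_congr fun x hx => ?_
  have hx := hspec x hx
  field_simp
  exact (Real.sq_sqrt hx.le).symm

lemma exists_orthogonal_conj_of_intertwiner {A B Y : Matrix m m ℝ} (hA : Aᵀ = -A)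
    (hB : Bᵀ = -B) (hY : Y.det ≠ 0) (h : Y * A = B * Y) :
    ∃ r ∈ orthogonalGroup m ℝ, B = r * A * rᵀ := by
  have hYt : Yᵀ * B = A * Yᵀ := by
    simpa [transpose_mul, hA, hB] using (congr_arg transpose h).symm
  set P := Yᵀ * Y
  have hPA : Commute P A :=
    calc P * A = Yᵀ * (B * Y) := by rw [← h, Matrix.mul_assoc]
      _ = A * P := by rw [← Matrix.mul_assoc, hYt, Matrix.mul_assoc]
  have hP : P.PosDef := by
    simpa [P] using PosDef.conjTranspose_mul_self Y
      (mulVec_injective_iff_isUnit.2 ((isUnit_iff_isUnit_det _).2 hY.isUnit))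
  set Q := cfc (fun x => (√x)⁻¹) P
  have hQ : Qᵀ = Q := (cfc_predicate (p := IsSelfAdjoint) _ P : IsSelfAdjoint Q)
  have hQA : Commute Q A := hPA.cfc_real _
  set r := Y * Q
  have hr : r ∈ orthogonalGroup m ℝ := by
    rw [mem_orthogonalGroup_iff']
    simpa [r, transpose_mul, hQ, P, Matrix.mul_assoc] using
      hP.cfc_inv_sqrt_mul_self_mul_cfc_inv_sqrt
  have hBr : B * r = r * A :=
    calc B * (Y * Q) = Y * (A * Q) := by rw [← Matrix.mul_assoc, ← h, Matrix.mul_assoc]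
      _ = Y * Q * A := by rw [← hQA.eq, Matrix.mul_assoc]
  refine ⟨r, hr, ?_⟩
  rw [← hBr, Matrix.mul_assoc, (mem_orthogonalGroup_iff _ _).1 hr, Matrix.mul_one]

end Matrix

/-- Two skew-symmetric real matrices are orthogonally conjugate iff they have the same
characteristic polynomial. -/
theorem stmt16 {n : ℕ} (ω₁ ω₂ : Mat n) (h₁ : IsSkew ω₁) (h₂ : IsSkew ω₂) :
    (∃ r : Mat n, IsOrth r ∧ ω₂ = r * ω₁ * r⁻¹) ↔ ω₁.charpoly = ω₂.charpoly := by
  constructor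
  · rintro ⟨r, hr, rfl⟩
    rw [inv_eq_right_inv hr.1, charpoly_mul_comm, ← Matrix.mul_assoc, hr.2, Matrix.one_mul]
  · intro h
    obtain ⟨V, hV, hVω⟩ := exists_complex_intertwiner_of_charpoly_eq h₁ h₂ h
    obtain ⟨Y, hY, hYω⟩ := exists_real_intertwiner_of_complex hV hVω
    obtain ⟨r, hr, hrω⟩ := exists_orthogonal_conj_of_intertwiner h₁ h₂ hY hYω
    have hrrt : r * rᵀ = 1 := (mem_orthogonalGroup_iff _ _).1 hr
    exact ⟨r, ⟨hrrt, (mem_orthogonalGroup_iff' _ _).1 hr⟩, by rw [inv_eq_right_inv hrrt, hrω]⟩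
end
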